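/- No universal bound on partial energies of probability measures on the bi-tree: for every function F : (1,∞) → (0,∞) there exist a real number x > 1, an integer N ≥ 1, and a probability measure μ (|μ| = 1) on the boundary of the bi-tree T² of depth N such that E_x[μ] = ∑_{α∈T² : V^μ(α) ≤ x} (𝕀*μ(α))² > F(x). -/

import Mathlib

open Finset

def strings : ℕ → Finset (List Bool)
  | 0 => {([] : List Bool)}
  | N + 1 =>
      {([] : List Bool)} ∪ (strings N).image (List.cons true) ∪ (strings N).image (List.cons false)

/-- Vertices of the bi-tree `T²` of depth `N`: pairs of binary strings of length at most `N`,
ordered by `(α,β) ≤ (α',β')` iff `α' <+: α` and `β' <+: β`. -/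
def biVertices (N : ℕ) : Finset (List Bool × List Bool) := strings N ×ˢ strings N

/-- `𝕀 f (p) = ∑_{p' ≥ p} f p'`. -/
noncomputable def biI (N : ℕ) (f : List Bool × List Bool → ℝ) (p : List Bool × List Bool) : ℝ :=
  ∑ q ∈ (biVertices N).filter (fun q => q.1 <+: p.1 ∧ q.2 <+: p.2), f q

/-- `𝕀* f (p) = ∑_{p' ≤ p} f p'`. -/
noncomputable def biIstar (N : ℕ) (f : List Bool × List Bool → ℝ) (p : List Bool × List Bool) : ℝ :=
  ∑ q ∈ (biVertices N).filter (fun q => p.1 <+: q.1 ∧ p.2 <+: q.2), f q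

/-- The potential `V^μ = 𝕀 (𝕀* μ)` on the bi-tree. -/
noncomputable def biV (N : ℕ) (μ : List Bool × List Bool → ℝ) : List Bool × List Bool → ℝ :=
  biI N (biIstar N μ)

/-- The total mass `|μ|`. -/
noncomputable def biMass (N : ℕ) (μ : List Bool × List Bool → ℝ) : ℝ :=
  ∑ p ∈ biVertices N, μ p

/-- A measure on the boundary `∂T²`: a nonnegative function vanishing off pairs of strings
both of length exactly `N`. -/
def IsBiMeasureOnBoundary (N : ℕ) (μ : List Bool × List Bool → ℝ) : Prop :=
  (∀ p, 0 ≤ μ p) ∧ ∀ p, μ p ≠ 0 → p.1.length = N ∧ p.2.length = N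

/-- The energy `E[ν] = ∑_{α∈T²} (𝕀*ν(α))²`. -/
noncomputable def biEnergy (N : ℕ) (ν : List Bool × List Bool → ℝ) : ℝ :=
  ∑ p ∈ biVertices N, (biIstar N ν p) ^ 2

/-- The partial energy `E_ε[ν] = ∑_{α∈T² : V^ν(α) ≤ ε} (𝕀*ν(α))²`. -/
noncomputable def biPartialEnergy (N : ℕ) (ν : List Bool × List Bool → ℝ) (ε : ℝ) : ℝ :=
  ∑ p ∈ (biVertices N).filter (fun p => biV N ν p ≤ ε), (biIstar N ν p) ^ 2

/-- `cap(E) = inf { ∑ f² : f ≥ 0, 𝕀f ≥ 1 on E }` on the bi-tree of depth `N`. -/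
noncomputable def biCap (N : ℕ) (E : Set (List Bool × List Bool)) : ℝ :=
  sInf { t : ℝ | ∃ f : List Bool × List Bool → ℝ, (∀ p, 0 ≤ f p) ∧
    (∀ p ∈ E, 1 ≤ biI N f p) ∧ t = ∑ p ∈ biVertices N, (f p) ^ 2 }

/-- Superadditivity in each variable on the bi-tree of depth `N`. -/
def BiSuperadditive (N : ℕ) (g : List Bool × List Bool → ℝ) : Prop :=
  (∀ α β : List Bool, α.length < N → β.length ≤ N →
    g (α ++ [false], β) + g (α ++ [true], β) ≤ g (α, β)) ∧
  (∀ α β : List Bool, α.length ≤ N → β.length < N →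
    g (α, β ++ [false]) + g (α, β ++ [true]) ≤ g (α, β))

/-! The measure is uniform on the `2 ^ m` boundary points `(σ a, τ a)`, `a < 2 ^ m`, where `σ a`
lists the binary digits of `a` starting from the lowest one and `τ a` starting from the highest
one. The vertex `(σ a ↾ s, τ a ↾ t)` fixes `min m (s + t)` digits of `a`, so `𝕀*μ` there is at
most `2⁻ˢ 2⁻ᵗ + 2⁻ᵐ`; summing over the ancestors of `(σ a ↾ i, τ a ↾ j)` bounds the potential
by `4 + (i + 1)(j + 1) / 2 ^ m ≤ 5` below the hyperbola `(i + 1)(j + 1) ≤ 2 ^ m`. Each atom has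
`∑_{i < 2 ^ m} ⌊2 ^ m / (i + 1)⌋ ≥ m 2 ^ (m - 1)` ancestors below that hyperbola, and `𝕀*μ` is
at least `2⁻ᵐ` at each of them, so `E₅[μ] ≥ m / 2`. -/

lemma mem_strings {N : ℕ} {l : List Bool} : l ∈ strings N ↔ l.length ≤ N := by
  induction N generalizing l with
  | zero => simp [strings, List.length_eq_zero_iff]
  | succ N ih =>
    match l with
    | [] => simp [strings]
    | b :: t => cases b <;> simp [strings, ih]

lemma mem_biVertices {N : ℕ} {p : List Bool × List Bool} :
    p ∈ biVertices N ↔ p.1.length ≤ N ∧ p.2.length ≤ N := by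
  simp [biVertices, mem_strings]

lemma biI_take_le (N : ℕ) {g : List Bool × List Bool → ℝ} (hg : ∀ q, 0 ≤ g q)
    (l₁ l₂ : List Bool) (i j : ℕ) :
    biI N g (l₁.take i, l₂.take j) ≤
      ∑ st ∈ range (i + 1) ×ˢ range (j + 1), g (l₁.take st.1, l₂.take st.2) := by
  have hsub : (biVertices N).filter (fun q => q.1 <+: l₁.take i ∧ q.2 <+: l₂.take j) ⊆
      (range (i + 1) ×ˢ range (j + 1)).image fun st => (l₁.take st.1, l₂.take st.2) := by
    rintro ⟨q₁, q₂⟩ hq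
    obtain ⟨-, h₁, h₂⟩ := mem_filter.1 hq
    refine mem_image.2 ⟨(q₁.length, q₂.length), ?_, ?_⟩
    · have := h₁.length_le; have := h₂.length_le
      simp only [mem_product, mem_range, List.length_take] at *
      omega
    · simp only [Prod.mk.injEq]
      exact ⟨(List.prefix_iff_eq_take.1 (h₁.trans (List.take_prefix _ _))).symm,
        (List.prefix_iff_eq_take.1 (h₂.trans (List.take_prefix _ _))).symm⟩
  exact (sum_le_sum_of_subset_of_nonneg hsub fun q _ _ => hg q).trans
    (sum_image_le_of_nonneg fun q _ => hg q)

section UniformAtoms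

variable {ι : Type*} (A : Finset ι) (x : ι → List Bool × List Bool)

noncomputable def uniformAtoms : List Bool × List Bool → ℝ :=
  fun p => ∑ a ∈ A, if x a = p then (#A : ℝ)⁻¹ else 0

lemma uniformAtoms_isBiMeasureOnBoundary {N : ℕ}
    (hx : ∀ a ∈ A, (x a).1.length = N ∧ (x a).2.length = N) :
    IsBiMeasureOnBoundary N (uniformAtoms A x) := by
  refine ⟨fun p => sum_nonneg fun a _ => by positivity, fun p hp => ?_⟩
  obtain ⟨a, ha, hne⟩ := exists_ne_zero_of_sum_ne_zero hp
  obtain rfl : x a = p := by by_contra h; simp [h] at hne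
  exact hx a ha

variable {A x}

lemma biIstar_uniformAtoms {N : ℕ} (hx : ∀ a ∈ A, x a ∈ biVertices N)
    (q : List Bool × List Bool) :
    biIstar N (uniformAtoms A x) q = #{a ∈ A | q.1 <+: (x a).1 ∧ q.2 <+: (x a).2} / #A := by
  unfold biIstar uniformAtoms
  rw [sum_comm, card_filter, Nat.cast_sum, sum_div]
  refine sum_congr rfl fun a ha => ?_
  rw [sum_ite_eq (biVertices N |>.filter _) (x a)]
  split_ifs <;> simp_all

lemma biMass_uniformAtoms {N : ℕ} (hA : A.Nonempty) (hx : ∀ a ∈ A, x a ∈ biVertices N) :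
    biMass N (uniformAtoms A x) = 1 := by
  have : biMass N (uniformAtoms A x) = biIstar N (uniformAtoms A x) ([], []) := by
    simp [biMass, biIstar]
  rw [this, biIstar_uniformAtoms hx]
  simp [hA.ne_empty]

lemma biPartialEnergy_uniformAtoms_ge {N : ℕ} (hx : ∀ a ∈ A, x a ∈ biVertices N) (ε : ℝ) :
    (∑ a ∈ A, #{q ∈ biVertices N | biV N (uniformAtoms A x) q ≤ ε ∧
        q.1 <+: (x a).1 ∧ q.2 <+: (x a).2} : ℝ) / #A ^ 2 ≤
      biPartialEnergy N (uniformAtoms A x) ε := by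
  let r : List Bool × List Bool → ι → Prop := fun q a => q.1 <+: (x a).1 ∧ q.2 <+: (x a).2
  calc (∑ a ∈ A, #{q ∈ biVertices N | biV N (uniformAtoms A x) q ≤ ε ∧ r q a} : ℝ) / #A ^ 2
      = ∑ q ∈ (biVertices N).filter (biV N (uniformAtoms A x) · ≤ ε),
          (#(A.bipartiteAbove r q) : ℝ) / #A ^ 2 := by
        rw [← sum_div, ← Nat.cast_sum, ← Nat.cast_sum,
          sum_card_bipartiteAbove_eq_sum_card_bipartiteBelow]
        simp only [bipartiteBelow, filter_filter]
    _ ≤ ∑ q ∈ (biVertices N).filter (biV N (uniformAtoms A x) · ≤ ε),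
          ((#(A.bipartiteAbove r q) : ℝ) / #A) ^ 2 := by
        refine sum_le_sum fun q _ => ?_
        rw [div_pow]
        gcongr
        exact_mod_cast Nat.le_self_pow two_ne_zero _
    _ = biPartialEnergy N (uniformAtoms A x) ε := by
        simp only [biPartialEnergy, biIstar_uniformAtoms hx, bipartiteAbove, r]

end UniformAtoms

def bitString (N : ℕ) (f : ℕ → Bool) : List Bool := (List.range N).map f

@[simp]
lemma length_bitString (N : ℕ) (f : ℕ → Bool) : (bitString N f).length = N := by
  simp [bitString]

lemma take_bitString {s N : ℕ} (h : s ≤ N) (f : ℕ → Bool) :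
    (bitString N f).take s = bitString s f := by
  simp [bitString, ← List.map_take, List.take_range, Nat.min_eq_left h]

lemma eq_of_bitString_prefix {s N : ℕ} {f g : ℕ → Bool} (h : bitString s f <+: bitString N g) :
    ∀ u < s, f u = g u := by
  have hs : s ≤ N := by simpa using h.length_le
  have := List.prefix_iff_eq_take.1 h
  rw [length_bitString, take_bitString hs, bitString, bitString, List.map_inj_left] at this
  simpa using this

lemma card_testBit_agree_le (m s t a : ℕ) :
    #{b ∈ range (2 ^ m) | (∀ u < s, a.testBit u = b.testBit u) ∧
        ∀ u < t, a.testBit (m - 1 - u) = b.testBit (m - 1 - u)} ≤ 2 ^ (m - (s + t)) := by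
  set k := m - (s + t)
  calc _ ≤ #(range (2 ^ k)) := by
        refine card_le_card_of_injOn (fun b => (b >>> s) % 2 ^ k)
          (fun b _ => by simpa using Nat.mod_lt _ (by positivity)) ?_
        intro b hb c hc hbc
        simp only [coe_filter, mem_range, Set.mem_ofPred_eq] at hb hc
        obtain ⟨hb, hbs, hbt⟩ := hb
        obtain ⟨hc, hcs, hct⟩ := hc
        refine Nat.eq_of_testBit_eq fun v => ?_
        by_cases hvs : v < s
        · exact (hbs v hvs).symm.trans (hcs v hvs)
        by_cases hvm : m ≤ v
        · have hpow : 2 ^ m ≤ 2 ^ v := Nat.pow_le_pow_right two_pos hvm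
          rw [Nat.testBit_lt_two_pow (hb.trans_le hpow), Nat.testBit_lt_two_pow (hc.trans_le hpow)]
        by_cases hvk : v < s + k
        · have := congrArg (Nat.testBit · (v - s)) hbc
          simpa [Nat.testBit_mod_two_pow, Nat.testBit_shiftRight, Nat.add_sub_cancel' (not_lt.1 hvs),
            show v - s < k by omega] using this
        · have hu : m - 1 - (m - 1 - v) = v := by omega
          have := (hbt (m - 1 - v) (by omega)).symm.trans (hct (m - 1 - v) (by omega))
          rwa [hu] at this
    _ = 2 ^ k := card_range _

lemma two_pow_sub_div_le (m s t : ℕ) :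
    (2 : ℝ) ^ (m - (s + t)) / 2 ^ m ≤ (1 / 2) ^ s * (1 / 2) ^ t + 1 / 2 ^ m := by
  by_cases hst : s + t ≤ m
  · rw [pow_sub₀ _ two_ne_zero hst, mul_div_right_comm, div_self (by positivity), one_mul,
      one_div, inv_pow, inv_pow, ← mul_inv, ← pow_add]
    linarith [show (0 : ℝ) < 1 / 2 ^ m by positivity]
  · rw [Nat.sub_eq_zero_of_le (by omega), pow_zero]
    linarith [show (0 : ℝ) ≤ (1 / 2) ^ s * (1 / 2) ^ t by positivity]

lemma sum_two_pow_sub_div_le {m i j : ℕ} (hij : (i + 1) * (j + 1) ≤ 2 ^ m) :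
    ∑ st ∈ range (i + 1) ×ˢ range (j + 1), (2 : ℝ) ^ (m - (st.1 + st.2)) / 2 ^ m ≤ 5 := by
  have hgrid : ((i + 1 : ℕ) * (j + 1 : ℕ) : ℝ) / 2 ^ m ≤ 1 := by
    rw [div_le_one (by positivity)]; exact_mod_cast hij
  calc _ ≤ ∑ st ∈ range (i + 1) ×ˢ range (j + 1), ((1 / 2 : ℝ) ^ st.1 * (1 / 2) ^ st.2 + 1 / 2 ^ m) :=
        sum_le_sum fun st _ => two_pow_sub_div_le m st.1 st.2
    _ = (∑ s ∈ range (i + 1), (1 / 2 : ℝ) ^ s) * (∑ t ∈ range (j + 1), (1 / 2 : ℝ) ^ t) +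
          ((i + 1 : ℕ) * (j + 1 : ℕ) : ℝ) / 2 ^ m := by
        rw [sum_add_distrib, sum_const, card_product, card_range, card_range, nsmul_eq_mul,
          sum_product, sum_mul_sum]
        push_cast
        ring
    _ ≤ 2 * 2 + 1 := add_le_add (mul_le_mul (sum_geometric_two_le _) (sum_geometric_two_le _)
        (sum_nonneg fun _ _ => by positivity) zero_le_two) hgrid
    _ = 5 := by norm_num

section DiagonalMeasure

variable (m : ℕ)

def lowFirst (a : ℕ) : List Bool := bitString (2 ^ m) a.testBit

-- Past position `m - 1` the truncated subtraction repeats digit `0`; this only adds constraints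
-- in `card_testBit_agree_le`.
def highFirst (a : ℕ) : List Bool := bitString (2 ^ m) fun u => a.testBit (m - 1 - u)

@[simp]
lemma length_lowFirst (a : ℕ) : (lowFirst m a).length = 2 ^ m := length_bitString _ _

@[simp]
lemma length_highFirst (a : ℕ) : (highFirst m a).length = 2 ^ m := length_bitString _ _

noncomputable def diagonalMeasure : List Bool × List Bool → ℝ :=
  uniformAtoms (range (2 ^ m)) fun a => (lowFirst m a, highFirst m a)

lemma diagonal_mem_biVertices (a : ℕ) : (lowFirst m a, highFirst m a) ∈ biVertices (2 ^ m) := by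
  simp [mem_biVertices]

lemma diagonalMeasure_isBiMeasureOnBoundary : IsBiMeasureOnBoundary (2 ^ m) (diagonalMeasure m) :=
  uniformAtoms_isBiMeasureOnBoundary _ _ fun a _ => ⟨length_lowFirst m a, length_highFirst m a⟩

lemma biMass_diagonalMeasure : biMass (2 ^ m) (diagonalMeasure m) = 1 :=
  biMass_uniformAtoms (nonempty_range_iff.2 (by positivity)) fun a _ => diagonal_mem_biVertices m a

variable {m}

lemma biIstar_diagonalMeasure_take_le {s t : ℕ} (hs : s ≤ 2 ^ m) (ht : t ≤ 2 ^ m) (a : ℕ) :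
    biIstar (2 ^ m) (diagonalMeasure m) ((lowFirst m a).take s, (highFirst m a).take t) ≤
      (2 : ℝ) ^ (m - (s + t)) / 2 ^ m := by
  rw [diagonalMeasure, biIstar_uniformAtoms fun a _ => diagonal_mem_biVertices m a, card_range,
    Nat.cast_pow, Nat.cast_two]
  gcongr
  refine (Nat.cast_le.2 ((card_le_card fun b hb => ?_).trans
    (card_testBit_agree_le m s t a))).trans_eq (by push_cast; rfl)
  simp only [mem_filter, lowFirst, highFirst, take_bitString hs, take_bitString ht] at hb ⊢
  exact ⟨hb.1, eq_of_bitString_prefix hb.2.1, eq_of_bitString_prefix hb.2.2⟩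

lemma biV_diagonalMeasure_take_le {i j : ℕ} (hij : (i + 1) * (j + 1) ≤ 2 ^ m) (a : ℕ) :
    biV (2 ^ m) (diagonalMeasure m) ((lowFirst m a).take i, (highFirst m a).take j) ≤ 5 := by
  have hi : i + 1 ≤ 2 ^ m := (Nat.le_mul_of_pos_right _ j.succ_pos).trans hij
  have hj : j + 1 ≤ 2 ^ m := (Nat.le_mul_of_pos_left _ i.succ_pos).trans hij
  have hμ := (diagonalMeasure_isBiMeasureOnBoundary m).1
  calc _ ≤ ∑ st ∈ range (i + 1) ×ˢ range (j + 1),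
        biIstar (2 ^ m) (diagonalMeasure m) ((lowFirst m a).take st.1, (highFirst m a).take st.2) :=
        biI_take_le (2 ^ m) (fun q => sum_nonneg fun p _ => hμ p) (lowFirst m a) (highFirst m a) i j
    _ ≤ ∑ st ∈ range (i + 1) ×ˢ range (j + 1), (2 : ℝ) ^ (m - (st.1 + st.2)) / 2 ^ m := by
        refine sum_le_sum fun st hst => ?_
        simp only [mem_product, mem_range] at hst
        exact biIstar_diagonalMeasure_take_le (s := st.1) (t := st.2) (by omega) (by omega) a
    _ ≤ 5 := sum_two_pow_sub_div_le hij

end DiagonalMeasure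

lemma mul_two_pow_le_two_mul_sum_div (m : ℕ) :
    m * 2 ^ m ≤ 2 * ∑ i ∈ range (2 ^ m), 2 ^ m / (i + 1) := by
  induction m with
  | zero => simp
  | succ m ih =>
    have hdouble : ∑ i ∈ range (2 ^ m), 2 * (2 ^ m / (i + 1)) ≤
        ∑ i ∈ range (2 ^ m), 2 ^ (m + 1) / (i + 1) :=
      sum_le_sum fun i _ => by rw [pow_succ']; exact Nat.mul_div_le_mul_div_assoc _ _ _
    have htail : 2 ^ m ≤ ∑ i ∈ range (2 ^ m), 2 ^ (m + 1) / (2 ^ m + i + 1) := by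
      refine (card_range (2 ^ m)).symm.le.trans (card_eq_sum_ones _ ▸ sum_le_sum fun i hi => ?_)
      rw [mem_range] at hi
      exact (Nat.one_le_div_iff (by omega)).2 (by rw [pow_succ]; omega)
    rw [← mul_sum] at hdouble
    rw [show range (2 ^ (m + 1)) = range (2 ^ m + 2 ^ m) by rw [pow_succ, mul_two], sum_range_add]
    simp only [add_assoc] at htail ⊢
    rw [pow_succ] at *
    linarith

lemma sum_div_succ_le_card_lowPotential_ancestors (m a : ℕ) :
    ∑ i ∈ range (2 ^ m), 2 ^ m / (i + 1) ≤
      #{q ∈ biVertices (2 ^ m) | biV (2 ^ m) (diagonalMeasure m) q ≤ 5 ∧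
        q.1 <+: lowFirst m a ∧ q.2 <+: highFirst m a} := by
  calc _ = #((range (2 ^ m)).sigma fun i => range (2 ^ m / (i + 1))) := by simp [card_sigma]
    _ ≤ _ := card_le_card_of_injOn
      (fun ij => ((lowFirst m a).take ij.1, (highFirst m a).take ij.2))
      (fun ij hij => ?_) (fun ij hij kl hkl h => ?_)
  · simp only [coe_sigma, Set.mem_sigma_iff, mem_coe, mem_range] at hij
    have hgrid := (Nat.le_div_iff_mul_le ij.1.succ_pos).1 hij.2
    simp only [coe_filter, Set.mem_ofPred_eq, mem_biVertices, List.length_take, length_lowFirst,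
      length_highFirst]
    exact ⟨⟨min_le_right _ _, min_le_right _ _⟩,
      biV_diagonalMeasure_take_le (by rw [mul_comm]; exact hgrid) a,
      List.take_prefix _ _, List.take_prefix _ _⟩
  · simp only [coe_sigma, Set.mem_sigma_iff, mem_coe, mem_range] at hij hkl
    have h₁ := congrArg (List.length ∘ Prod.fst) h
    have h₂ := congrArg (List.length ∘ Prod.snd) h
    simp only [Function.comp, List.length_take, length_lowFirst, length_highFirst] at h₁ h₂
    have := Nat.div_le_self (2 ^ m) (ij.1 + 1)
    have := Nat.div_le_self (2 ^ m) (kl.1 + 1)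
    exact Sigma.ext (by omega) (heq_of_eq (by omega))

lemma biPartialEnergy_diagonalMeasure_ge (m : ℕ) :
    (m : ℝ) / 2 ≤ biPartialEnergy (2 ^ m) (diagonalMeasure m) 5 := by
  set h := ∑ i ∈ range (2 ^ m), 2 ^ m / (i + 1)
  have hh : (m : ℝ) * 2 ^ m ≤ 2 * h := by exact_mod_cast mul_two_pow_le_two_mul_sum_div m
  calc (m : ℝ) / 2 ≤ h / 2 ^ m := by rw [div_le_div_iff₀ two_pos (by positivity)]; linarith
    _ = (∑ _a ∈ range (2 ^ m), (h : ℝ)) / #(range (2 ^ m)) ^ 2 := by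
        rw [sum_const, card_range, nsmul_eq_mul]
        push_cast
        field_simp
    _ ≤ (∑ a ∈ range (2 ^ m), (#{q ∈ biVertices (2 ^ m) | biV (2 ^ m) (diagonalMeasure m) q ≤ 5 ∧
          q.1 <+: lowFirst m a ∧ q.2 <+: highFirst m a} : ℝ)) / #(range (2 ^ m)) ^ 2 := by
        gcongr with a
        exact_mod_cast sum_div_succ_le_card_lowPotential_ancestors m a
    _ ≤ _ := biPartialEnergy_uniformAtoms_ge (fun a _ => diagonal_mem_biVertices m a) 5

/-- **No universal bound on partial energies of probability measures on the bi-tree**: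
for every `F : (1,∞) → (0,∞)` there are `x > 1`, a depth `N` and a probability measure `μ`
on `∂T²` with `E_x[μ] > F(x)`. -/
theorem stmt13 : ∀ F : ℝ → ℝ, (∀ x, 1 < x → 0 < F x) →
    ∃ x : ℝ, 1 < x ∧ ∃ N : ℕ, 1 ≤ N ∧ ∃ μ : List Bool × List Bool → ℝ,
      IsBiMeasureOnBoundary N μ ∧ biMass N μ = 1 ∧
      F x < biPartialEnergy N μ x := by
  intro F _
  obtain ⟨m, hm⟩ := exists_nat_gt (2 * F 5)
  refine ⟨5, by norm_num, 2 ^ m, Nat.one_le_two_pow, diagonalMeasure m,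
    diagonalMeasure_isBiMeasureOnBoundary m, biMass_diagonalMeasure m, ?_⟩
  linarith [biPartialEnergy_diagonalMeasure_ge m]
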